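/- arXiv:2312.08081 — 4 statements merged into one kernel-verified Lean document; each statement's English description precedes it below -/
import Mathlib

section
/- Let t : Z^d → ℝ be a nonnegative subsolution of (H_V - λ)ψ = 0 in Z^d_{≥N} with t_n = 0 whenever N-1 ≤ |n| < N+1, and let ξ : Z^d → ℝ be finitely supported. Then Σ_{|n|≥N} Σ_{j=1}^d [D_j(ξt)]_n² + Σ_{|n|≥N} (V_n - λ) ξ_n² t_n² ≤ Σ_{|n|≥N} Σ_{j=1}^d t_n t_{n-δ_j} (D_j ξ)_n². -/
/-!
Let `T` be the restriction of `t` to `ℤ^d_{≥N}`. Since `t` vanishes on the shell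
`N - 1 ≤ |n| < N + 1`, `T` agrees with `t` at every neighbour of a point of `ℤ^d_{≥N}` and
vanishes at every neighbour of a point outside; hence all three sums may be taken over the whole
lattice with `t` replaced by `T`, and `-ΔT = -Δt` on `ℤ^d_{≥N}`. The pointwise identity
`(D_j(ξT))² = D_jT · D_j(ξ²T) + T_n T_{n-δ_j} (D_jξ)²` followed by summation by parts turns the
left-hand side into `⟨ξ²T, (H_V - λ)T⟩` plus the right-hand side, and `⟨ξ²T, (H_V - λ)T⟩ ≤ 0`
because `ξ²T ≥ 0` and `T` is a subsolution wherever it is nonzero.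
-/

open scoped BigOperators

noncomputable section

/-- Euclidean norm of a lattice point in `ℤ^d`. -/
def znorm {d : ℕ} (v : Fin d → ℤ) : ℝ := Real.sqrt (∑ j, ((v j : ℝ))^2)

/-- The discrete Laplacian `(-Δψ)_n = Σ_{|m-n|=1} (ψ_n - ψ_m)`. -/
def negLap {d : ℕ} (ψ : (Fin d → ℤ) → ℝ) (n : Fin d → ℤ) : ℝ :=
  ∑ᶠ (m : Fin d → ℤ) (_ : znorm (m - n) = 1), (ψ n - ψ m)

/-- The partial difference operator `(D_j ψ)_n = ψ_n - ψ_{n-δ_j}`. -/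
def Dop {d : ℕ} (j : Fin d) (ψ : (Fin d → ℤ) → ℝ) (n : Fin d → ℤ) : ℝ :=
  ψ n - ψ (n - Pi.single j 1)

open Function Set

variable {d : ℕ}

lemma znorm_eq_norm (v : Fin d → ℤ) :
    znorm v = ‖(WithLp.toLp 2 fun j => (v j : ℝ) : EuclideanSpace ℝ (Fin d))‖ := by
  simp [znorm, EuclideanSpace.norm_eq, sq_abs]

lemma abs_znorm_sub_znorm_le (a b : Fin d → ℤ) : |znorm a - znorm b| ≤ znorm (a - b) := by
  simp only [znorm_eq_norm, Pi.sub_apply, Int.cast_sub]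
  exact abs_norm_sub_norm_le _ _

lemma znorm_neg (v : Fin d → ℤ) : znorm (-v) = znorm v := by
  simp [znorm]

lemma znorm_single (j : Fin d) : znorm (Pi.single j 1 : Fin d → ℤ) = 1 := by
  simp [znorm, Pi.single_apply]

def latticeUnit : Fin d ⊕ Fin d → Fin d → ℤ :=
  Sum.elim (fun j => Pi.single j 1) (fun j => -Pi.single j 1)

lemma latticeUnit_injective : Injective (latticeUnit (d := d)) := by
  rintro (i | i) (j | j) h <;> have := congrFun h i <;> by_cases hij : i = j <;>
    simp [latticeUnit, hij] at this ⊢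

lemma znorm_eq_one_iff (v : Fin d → ℤ) : znorm v = 1 ↔ v ∈ range latticeUnit := by
  refine ⟨fun h => ?_, ?_⟩
  · have hsum : ∑ k, v k ^ 2 = 1 := by
      have : ∑ k, ((v k : ℝ)) ^ 2 = 1 := by simpa [znorm] using h
      exact_mod_cast this
    obtain ⟨j, hj⟩ : ∃ j, v j ≠ 0 := by
      by_contra! h0
      simp [h0] at hsum
    have hsplit := Finset.add_sum_erase Finset.univ (fun k => v k ^ 2) (Finset.mem_univ j)
    have hrest : 0 ≤ ∑ k ∈ Finset.univ.erase j, v k ^ 2 :=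
      Finset.sum_nonneg fun k _ => sq_nonneg (v k)
    have hvj : 0 < v j ^ 2 := by positivity
    have hother : ∀ k ∈ Finset.univ.erase j, v k ^ 2 = 0 :=
      (Finset.sum_eq_zero_iff_of_nonneg fun k _ => sq_nonneg (v k)).mp (by omega)
    have hv : v = Pi.single j (v j) := by
      funext k
      by_cases hkj : k = j
      · subst hkj; simp
      · simpa [hkj] using hother k (by simp [hkj])
    rcases sq_eq_one_iff.mp (show v j ^ 2 = 1 by omega) with h1 | h1
    · exact ⟨.inl j, by rw [hv, h1]; rfl⟩
    · exact ⟨.inr j, by rw [hv, h1, Pi.single_neg]; rfl⟩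
  · rintro ⟨i | i, rfl⟩ <;> simp [latticeUnit, znorm_neg, znorm_single]

lemma negLap_eq_sum_Dop (ψ : (Fin d → ℤ) → ℝ) (n : Fin d → ℤ) :
    negLap ψ n = ∑ j, (Dop j ψ n - Dop j ψ (n + Pi.single j 1)) := by
  have hnbr : {m | znorm (m - n) = 1} = range fun i => n + latticeUnit i := by
    ext m
    rw [mem_ofPred_eq, znorm_eq_one_iff]
    exact exists_congr fun i => by rw [eq_sub_iff_add_eq, add_comm]
  change ∑ᶠ m ∈ {m | znorm (m - n) = 1}, _ = _
  rw [hnbr, finsum_mem_range (g := fun i => n + latticeUnit i)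
      ((add_right_injective n).comp latticeUnit_injective),
    finsum_eq_sum_of_fintype, Fintype.sum_sum_type, ← Finset.sum_add_distrib]
  refine Finset.sum_congr rfl fun j _ => ?_
  simp only [latticeUnit, Sum.elim_inl, Sum.elim_inr, Dop, add_sub_cancel_right, ← sub_eq_add_neg]
  ring

lemma Function.HasFiniteSupport.fun_pow {α M₀ : Type*} [MonoidWithZero M₀] {f : α → M₀}
    (hf : f.HasFiniteSupport) {k : ℕ} (hk : k ≠ 0) : HasFiniteSupport fun a => f a ^ k :=
  hf.subset fun a ha h0 => ha (by simp [h0, zero_pow hk])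

lemma Function.HasFiniteSupport.Dop {φ : (Fin d → ℤ) → ℝ} (hφ : φ.HasFiniteSupport) (j : Fin d) :
    (Dop j φ).HasFiniteSupport :=
  hφ.sub (hφ.comp_of_injective (sub_left_injective (b := Pi.single j 1)))

lemma finsum_Dop_mul_Dop (f : (Fin d → ℤ) → ℝ) {φ : (Fin d → ℤ) → ℝ}
    (hφ : φ.HasFiniteSupport) (j : Fin d) :
    ∑ᶠ n, Dop j f n * Dop j φ n = ∑ᶠ n, (Dop j f n - Dop j f (n + Pi.single j 1)) * φ n := by
  have hshift : ∑ᶠ n, Dop j f n * φ (n - Pi.single j 1)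
      = ∑ᶠ n, Dop j f (n + Pi.single j 1) * φ n := by
    rw [← finsum_comp_equiv (Equiv.addRight (Pi.single j 1))]
    simp
  calc ∑ᶠ n, Dop j f n * Dop j φ n
      = ∑ᶠ n, (Dop j f n * φ n - Dop j f n * φ (n - Pi.single j 1)) :=
        finsum_congr fun n => mul_sub _ _ _
    _ = ∑ᶠ n, Dop j f n * φ n - ∑ᶠ n, Dop j f (n + Pi.single j 1) * φ n := by
        have hφ' : HasFiniteSupport fun n => φ (n - Pi.single j 1) :=
          hφ.comp_of_injective (sub_left_injective (b := Pi.single j 1))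
        rw [finsum_sub_distrib (hφ.fun_mul_right _) (hφ'.fun_mul_right _), hshift]
    _ = ∑ᶠ n, (Dop j f n - Dop j f (n + Pi.single j 1)) * φ n := by
        rw [← finsum_sub_distrib (hφ.fun_mul_right _) (hφ.fun_mul_right _)]
        simp only [sub_mul]

lemma finsum_sum_Dop_mul_Dop (f : (Fin d → ℤ) → ℝ) {φ : (Fin d → ℤ) → ℝ}
    (hφ : φ.HasFiniteSupport) :
    ∑ᶠ n, ∑ j, Dop j f n * Dop j φ n = ∑ᶠ n, negLap f n * φ n := by
  simp only [negLap_eq_sum_Dop, Finset.sum_mul]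
  rw [finsum_sum_comm _ _ fun j _ => (hφ.Dop j).fun_mul_right _,
    finsum_sum_comm _ _ fun j _ => hφ.fun_mul_right _]
  exact Finset.sum_congr rfl fun j _ => finsum_Dop_mul_Dop f hφ j

lemma Dop_mul_sq (ξ T : (Fin d → ℤ) → ℝ) (j : Fin d) (n : Fin d → ℤ) :
    Dop j (fun m => ξ m * T m) n ^ 2
      = Dop j T n * Dop j (fun m => ξ m ^ 2 * T m) n
        + T n * T (n - Pi.single j 1) * Dop j ξ n ^ 2 := by
  simp only [Dop]
  ring

lemma finsum_sum_Dop_mul_sq (T : (Fin d → ℤ) → ℝ) {ξ : (Fin d → ℤ) → ℝ}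
    (hξ : ξ.HasFiniteSupport) :
    ∑ᶠ n, ∑ j, Dop j (fun m => ξ m * T m) n ^ 2
      = ∑ᶠ n, negLap T n * (ξ n ^ 2 * T n)
        + ∑ᶠ n, ∑ j, T n * T (n - Pi.single j 1) * Dop j ξ n ^ 2 := by
  have hφ : HasFiniteSupport fun n => ξ n ^ 2 * T n := (hξ.fun_pow two_ne_zero).fun_mul_left T
  simp only [Dop_mul_sq, Finset.sum_add_distrib]
  rw [finsum_add_distrib (.sum (fun j => (hφ.Dop j).fun_mul_right _) _)
    (.sum (fun j => ((hξ.Dop j).fun_pow two_ne_zero).fun_mul_right _) _),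
    finsum_sum_Dop_mul_Dop T hφ]

lemma znorm_add_single_sub_self (n : Fin d → ℤ) (j : Fin d) :
    znorm (n + Pi.single j 1 - n) = 1 := by
  simp [znorm_single]

lemma znorm_sub_single_sub_self (n : Fin d → ℤ) (j : Fin d) :
    znorm (n - Pi.single j 1 - n) = 1 := by
  simp [znorm_neg, znorm_single]

/-- `ℤ^d_{≥R}` -/
def latticeExterior (d : ℕ) (R : ℝ) : Set (Fin d → ℤ) := {n | R ≤ znorm n}

section Cutoff

variable {R : ℝ} {t : (Fin d → ℤ) → ℝ}

lemma indicator_latticeExterior_of_adjacent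
    (ht : ∀ n, R - 1 ≤ znorm n → znorm n < R + 1 → t n = 0)
    {m n : Fin d → ℤ} (hmn : znorm (m - n) = 1) :
    (latticeExterior d R).indicator t m = (latticeExterior d R).indicator (fun _ => t m) n := by
  have hmn' := abs_znorm_sub_znorm_le m n
  rw [hmn, abs_le] at hmn'
  by_cases hn : R ≤ znorm n <;> by_cases hm : R ≤ znorm m <;>
    simp only [indicator, latticeExterior, mem_ofPred_eq, hn, hm, if_true, if_false]
  · exact (ht m (by linarith) (by linarith)).symm
  · exact ht m (by linarith) (by linarith)

lemma Dop_mul_indicator_latticeExterior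
    (ht : ∀ n, R - 1 ≤ znorm n → znorm n < R + 1 → t n = 0)
    (ξ : (Fin d → ℤ) → ℝ) (j : Fin d) (n : Fin d → ℤ) :
    Dop j (fun m => ξ m * (latticeExterior d R).indicator t m) n
      = (latticeExterior d R).indicator (Dop j fun m => ξ m * t m) n := by
  have h := indicator_latticeExterior_of_adjacent ht (znorm_sub_single_sub_self n j)
  by_cases hn : n ∈ latticeExterior d R <;> simp [Dop, hn, h]

lemma indicator_latticeExterior_mul_sub_single
    (ht : ∀ n, R - 1 ≤ znorm n → znorm n < R + 1 → t n = 0) (j : Fin d) (n : Fin d → ℤ) :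
    (latticeExterior d R).indicator t n * (latticeExterior d R).indicator t (n - Pi.single j 1)
      = (latticeExterior d R).indicator (fun n => t n * t (n - Pi.single j 1)) n := by
  have h := indicator_latticeExterior_of_adjacent ht (znorm_sub_single_sub_self n j)
  by_cases hn : n ∈ latticeExterior d R <;> simp [hn, h]

lemma negLap_indicator_latticeExterior
    (ht : ∀ n, R - 1 ≤ znorm n → znorm n < R + 1 → t n = 0)
    {n : Fin d → ℤ} (hn : n ∈ latticeExterior d R) :
    negLap ((latticeExterior d R).indicator t) n = negLap t n := by
  simp only [negLap_eq_sum_Dop, Dop, add_sub_cancel_right,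
    indicator_latticeExterior_of_adjacent ht (znorm_add_single_sub_self n _),
    indicator_latticeExterior_of_adjacent ht (znorm_sub_single_sub_self n _), indicator_of_mem hn]

lemma finsum_negLap_indicator_mul_add_nonpos (W : (Fin d → ℤ) → ℝ) {ξ : (Fin d → ℤ) → ℝ}
    (ht_nonneg : ∀ n, 0 ≤ t n)
    (ht_sub : ∀ n ∈ latticeExterior d R, negLap t n + W n * t n ≤ 0)
    (ht : ∀ n, R - 1 ≤ znorm n → znorm n < R + 1 → t n = 0)
    (hξ : ξ.HasFiniteSupport) :
    ∑ᶠ n, negLap ((latticeExterior d R).indicator t) n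
          * (ξ n ^ 2 * (latticeExterior d R).indicator t n)
      + ∑ᶠ n, W n * ξ n ^ 2 * (latticeExterior d R).indicator t n ^ 2 ≤ 0 := by
  set T := (latticeExterior d R).indicator t with hT
  have hξ2 := hξ.fun_pow two_ne_zero
  rw [← finsum_add_distrib ((hξ2.fun_mul_left T).fun_mul_right _)
    ((hξ2.fun_mul_right W).fun_mul_left fun n => T n ^ 2)]
  refine finsum_induction (· ≤ 0) le_rfl (fun _ _ => add_nonpos) fun n => ?_
  by_cases hn : n ∈ latticeExterior d R
  · rw [negLap_indicator_latticeExterior ht hn, hT, indicator_of_mem hn]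
    linear_combination mul_nonpos_of_nonneg_of_nonpos
      (mul_nonneg (sq_nonneg (ξ n)) (ht_nonneg n)) (ht_sub n hn)
  · simp [hT, hn]

end Cutoff

/-- Inequality derived from a nonnegative subsolution `t` of `(H_V - λ)ψ = 0` in
`ℤ^d_{≥N}` vanishing in the annulus `N-1 ≤ |n| < N+1`:
`Σ_{|n|≥N} Σ_j [D_j(ξt)]_n² + Σ_{|n|≥N} (V_n - λ) ξ_n² t_n²
  ≤ Σ_{|n|≥N} Σ_j t_n t_{n-δ_j} (D_j ξ)_n²`. -/
theorem subsolution_inequality {d : ℕ} (N : ℕ) (V : (Fin d → ℤ) → ℝ) (lam : ℝ)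
    (t ξ : (Fin d → ℤ) → ℝ)
    (ht_nonneg : ∀ n, 0 ≤ t n)
    (ht_sub : ∀ n : Fin d → ℤ, (N : ℝ) ≤ znorm n →
      negLap t n + (V n - lam) * t n ≤ 0)
    (ht_van : ∀ n : Fin d → ℤ, (N : ℝ) - 1 ≤ znorm n → znorm n < (N : ℝ) + 1 → t n = 0)
    (hξ : (Function.support ξ).Finite) :
    (∑ᶠ (n : Fin d → ℤ) (_ : (N : ℝ) ≤ znorm n),
        ∑ j : Fin d, (Dop j (fun m => ξ m * t m) n) ^ 2)
      + (∑ᶠ (n : Fin d → ℤ) (_ : (N : ℝ) ≤ znorm n), (V n - lam) * ξ n ^ 2 * t n ^ 2)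
    ≤ ∑ᶠ (n : Fin d → ℤ) (_ : (N : ℝ) ≤ znorm n),
        ∑ j : Fin d, t n * t (n - Pi.single j 1) * (Dop j ξ n) ^ 2 := by
  replace hξ : ξ.HasFiniteSupport := hξ
  set T := (latticeExterior d N).indicator t with hT
  have hE (f : (Fin d → ℤ) → ℝ) : ∑ᶠ (n) (_ : (N : ℝ) ≤ znorm n), f n
      = ∑ᶠ n, (latticeExterior d N).indicator f n := finsum_mem_def _ f
  have hkin : (latticeExterior d N).indicator (fun n => ∑ j, Dop j (fun m => ξ m * t m) n ^ 2)
      = fun n => ∑ j, Dop j (fun m => ξ m * T m) n ^ 2 := by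
    funext n
    by_cases hn : n ∈ latticeExterior d N <;>
      simp [hn, hT, Dop_mul_indicator_latticeExterior ht_van]
  have hpot : (latticeExterior d N).indicator (fun n => (V n - lam) * ξ n ^ 2 * t n ^ 2)
      = fun n => (V n - lam) * ξ n ^ 2 * T n ^ 2 := by
    funext n
    by_cases hn : n ∈ latticeExterior d N <;> simp [hn, hT]
  have hrhs : (latticeExterior d N).indicator
        (fun n => ∑ j, t n * t (n - Pi.single j 1) * Dop j ξ n ^ 2)
      = fun n => ∑ j, T n * T (n - Pi.single j 1) * Dop j ξ n ^ 2 := by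
    funext n
    simp only [hT, indicator_latticeExterior_mul_sub_single ht_van]
    by_cases hn : n ∈ latticeExterior d N <;> simp [hn]
  rw [hE, hE, hE, hkin, hpot, hrhs, finsum_sum_Dop_mul_sq T hξ]
  linarith [finsum_negLap_indicator_mul_add_nonpos (fun n => V n - lam) ht_nonneg ht_sub ht_van hξ]
end
end

section
/- If the ground state energy E := inf σ(H_V) > -∞ of the discrete Schrödinger operator H_V = -Δ + V on ℓ²(Z^d) is an eigenvalue, then E is a simple eigenvalue and the corresponding eigenvector can be chosen strictly positive. -/
open scoped BigOperators

noncomputable section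

/-!
Kato's inequality `|ψ n| * (H |ψ|) n ≤ ψ n * (H ψ) n` makes `|ψ|` a subsolution of
`H = H_V - E` whenever `ψ` is an eigenvector. Since `H ≥ 0` as a form, testing it on the
truncation of `|ψ|` to a cube, perturbed by `t δ_a`, gives `0 ≤ 2 t (H |ψ|)(a) + O(t²)` up to a
boundary term that vanishes as the cube grows because `ψ ∈ ℓ²`; hence `|ψ|` is itself an
eigenvector. A nonnegative eigenvector vanishing at one site vanishes at its neighbours, hence
everywhere since `ℤ^d` is connected. So `|ψ| > 0`, and every eigenvector `φ` equals `c |ψ|`: the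
eigenvector `φ - c |ψ|` that vanishes at the origin vanishes identically.
-/

open Finset Filter Topology

section Lattice

variable {d : ℕ}

def unitVecs (d : ℕ) : Finset (Fin d → ℤ) :=
  {v ∈ Fintype.piFinset fun _ => Icc (-1) 1 | znorm v = 1}

lemma mem_unitVecs {v : Fin d → ℤ} : v ∈ unitVecs d ↔ znorm v = 1 := by
  refine ⟨fun h => (mem_filter.mp h).2, fun h => mem_filter.mpr ⟨?_, h⟩⟩
  rw [Fintype.mem_piFinset]
  intro j
  have hsq : ((v j : ℝ)) ^ 2 ≤ 1 := by
    have hsum : ∑ i, ((v i : ℝ)) ^ 2 = 1 := by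
      rw [znorm, Real.sqrt_eq_one] at h
      exact h
    exact hsum ▸ single_le_sum (fun i _ => sq_nonneg ((v i : ℝ))) (mem_univ j)
  have : |(v j : ℝ)| ≤ 1 := (sq_le_one_iff_abs_le_one _).mp hsq
  rw [mem_Icc]
  exact_mod_cast abs_le.mp this

lemma neg_mem_unitVecs {e : Fin d → ℤ} (he : e ∈ unitVecs d) : -e ∈ unitVecs d := by
  simpa [mem_unitVecs, znorm] using he

lemma zero_notMem_unitVecs : (0 : Fin d → ℤ) ∉ unitVecs d := by
  simp [mem_unitVecs, znorm]

lemma single_mem_unitVecs (j : Fin d) : Pi.single j 1 ∈ unitVecs d := by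
  rw [mem_unitVecs, znorm, Real.sqrt_eq_one]
  rw [Finset.sum_eq_single j (fun i _ hij => by simp [hij]) (by simp)]
  simp

lemma abs_apply_le_one_of_mem_unitVecs {e : Fin d → ℤ} (he : e ∈ unitVecs d) (j : Fin d) :
    |e j| ≤ 1 :=
  abs_le.mpr (mem_Icc.mp (Fintype.mem_piFinset.mp (mem_filter.mp he).1 j))

lemma sum_unitVecs_neg {M : Type*} [AddCommMonoid M] (F : (Fin d → ℤ) → M) :
    ∑ e ∈ unitVecs d, F (-e) = ∑ e ∈ unitVecs d, F e :=
  sum_nbij' (-·) (-·) (fun _ => neg_mem_unitVecs) (fun _ => neg_mem_unitVecs)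
    (by simp) (by simp) (fun _ _ => rfl)

lemma negLap_eq_sum (ψ : (Fin d → ℤ) → ℝ) (n : Fin d → ℤ) :
    negLap ψ n = ∑ e ∈ unitVecs d, (ψ n - ψ (n + e)) := by
  have hnbr : {m | znorm (m - n) = 1} = (n + ·) '' ↑(unitVecs d) := by
    ext m
    exact ⟨fun h => ⟨m - n, mem_unitVecs.mpr h, add_sub_cancel n m⟩,
      by rintro ⟨e, he, rfl⟩; simpa [mem_unitVecs] using he⟩
  change ∑ᶠ m ∈ {m | znorm (m - n) = 1}, (ψ n - ψ m) = _
  rw [hnbr, finsum_mem_image (add_right_injective n).injOn, finsum_mem_coe_finset]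

theorem lattice_induction {P : (Fin d → ℤ) → Prop} {a : Fin d → ℤ} (ha : P a)
    (step : ∀ n, P n → ∀ e ∈ unitVecs d, P (n + e)) (n : Fin d → ℤ) : P n := by
  have hline : ∀ m, P m → ∀ j (k : ℤ), P (m + k • Pi.single j 1) := by
    intro m hm j k
    induction k using Int.induction_on with
    | zero => simpa using hm
    | succ k ih => simpa [add_smul, add_assoc] using step _ ih _ (single_mem_unitVecs j)
    | pred k ih =>
      have h := step _ ih _ (neg_mem_unitVecs (single_mem_unitVecs j))
      rwa [add_assoc, ← neg_one_smul ℤ (Pi.single j 1 : Fin d → ℤ), ← add_smul] at h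
  have hpartial : ∀ s : Finset (Fin d), P (a + ∑ j ∈ s, (n - a) j • Pi.single j 1) := by
    intro s
    induction s using Finset.induction_on with
    | empty => simpa using ha
    | insert j s hj ih =>
      simpa [sum_insert hj, add_comm, add_left_comm] using hline _ ih j ((n - a) j)
  have h := hpartial univ
  simp only [← Pi.single_smul, smul_eq_mul, mul_one, univ_sum_single] at h
  rwa [add_sub_cancel] at h

lemma negLap_eq_card_mul_sub (ψ : (Fin d → ℤ) → ℝ) (n : Fin d → ℤ) :
    negLap ψ n = #(unitVecs d) * ψ n - ∑ e ∈ unitVecs d, ψ (n + e) := by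
  rw [negLap_eq_sum, sum_sub_distrib, sum_const, nsmul_eq_mul]

theorem abs_mul_negLap_abs_le (ψ : (Fin d → ℤ) → ℝ) (n : Fin d → ℤ) :
    |ψ n| * negLap (fun m => |ψ m|) n ≤ ψ n * negLap ψ n := by
  rw [negLap_eq_sum, negLap_eq_sum, mul_sum, mul_sum]
  refine sum_le_sum fun e _ => ?_
  have hprod : ψ n * ψ (n + e) ≤ |ψ n| * |ψ (n + e)| := abs_mul (ψ n) _ ▸ le_abs_self _
  nlinarith [sq_abs (ψ n)]

def schrodingerOp (W : (Fin d → ℤ) → ℝ) :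
    ((Fin d → ℤ) → ℝ) →ₗ[ℝ] ((Fin d → ℤ) → ℝ) where
  toFun ψ n := negLap ψ n + W n * ψ n
  map_add' f g := by
    ext n
    simp only [Pi.add_apply, negLap_eq_card_mul_sub, sum_add_distrib]
    ring
  map_smul' c f := by
    ext n
    simp only [Pi.smul_apply, smul_eq_mul, RingHom.id_apply, negLap_eq_card_mul_sub, ← mul_sum]
    ring

lemma schrodingerOp_apply (W ψ : (Fin d → ℤ) → ℝ) (n : Fin d → ℤ) :
    schrodingerOp W ψ n = negLap ψ n + W n * ψ n := rfl

lemma schrodingerOp_eq (W ψ : (Fin d → ℤ) → ℝ) (n : Fin d → ℤ) :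
    schrodingerOp W ψ n = (#(unitVecs d) + W n) * ψ n - ∑ e ∈ unitVecs d, ψ (n + e) := by
  rw [schrodingerOp_apply, negLap_eq_card_mul_sub]
  ring

theorem abs_mul_schrodingerOp_abs_le (W ψ : (Fin d → ℤ) → ℝ) (n : Fin d → ℤ) :
    |ψ n| * schrodingerOp W (fun m => |ψ m|) n ≤ ψ n * schrodingerOp W ψ n := by
  have hW : |ψ n| * (W n * |ψ n|) = ψ n * (W n * ψ n) := by
    rw [mul_left_comm, abs_mul_abs_self, mul_left_comm]
  simp only [schrodingerOp_apply, mul_add, hW]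
  linarith [abs_mul_negLap_abs_le ψ n]

lemma schrodingerOp_congr_apply {W f g : (Fin d → ℤ) → ℝ} {n : Fin d → ℤ}
    (hn : f n = g n) (hnbr : ∀ e ∈ unitVecs d, f (n + e) = g (n + e)) :
    schrodingerOp W f n = schrodingerOp W g n := by
  rw [schrodingerOp_eq, schrodingerOp_eq, hn, sum_congr rfl hnbr]

lemma schrodingerOp_single_self (W : (Fin d → ℤ) → ℝ) (a : Fin d → ℤ) :
    schrodingerOp W (Pi.single a 1) a = #(unitVecs d) + W a := by
  have hnbr : ∀ e ∈ unitVecs d, (Pi.single a 1 : (Fin d → ℤ) → ℝ) (a + e) = 0 :=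
    fun e he => Pi.single_eq_of_ne (fun h => zero_notMem_unitVecs (add_eq_left.mp h ▸ he)) _
  rw [schrodingerOp_eq, sum_eq_zero hnbr, Pi.single_eq_same]
  ring

lemma sum_mul_shift_eq {f g : (Fin d → ℤ) → ℝ} {s : Finset (Fin d → ℤ)}
    (hf : ∀ n ∉ s, f n = 0) (hg : ∀ n ∉ s, g n = 0) (e : Fin d → ℤ) :
    ∑ n ∈ s, f n * g (n + e) = ∑ n ∈ s, f (n + -e) * g n := by
  rw [← finsum_eq_sum_of_support_subset _ fun n hn => ?_,
    ← finsum_eq_sum_of_support_subset _ fun n hn => ?_]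
  · simpa using finsum_comp_equiv (Equiv.addRight e) (f := fun m => f (m + -e) * g m)
  · by_contra hns
    exact hn (by simp [hg n hns])
  · by_contra hns
    exact hn (by simp [hf n hns])

theorem sum_mul_schrodingerOp_comm (W : (Fin d → ℤ) → ℝ) {f g : (Fin d → ℤ) → ℝ}
    {s : Finset (Fin d → ℤ)} (hf : ∀ n ∉ s, f n = 0) (hg : ∀ n ∉ s, g n = 0) :
    ∑ n ∈ s, f n * schrodingerOp W g n = ∑ n ∈ s, schrodingerOp W f n * g n := by
  have hnbr : ∑ n ∈ s, f n * ∑ e ∈ unitVecs d, g (n + e)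
      = ∑ n ∈ s, (∑ e ∈ unitVecs d, f (n + e)) * g n := by
    simp only [mul_sum, sum_mul]
    rw [sum_comm, sum_comm (s := s)]
    simp only [sum_mul_shift_eq hf hg]
    exact sum_unitVecs_neg (fun e => ∑ n ∈ s, f (n + e) * g n)
  simp only [schrodingerOp_eq, mul_sub, sub_mul, sum_sub_distrib, hnbr]
  congr 1
  exact sum_congr rfl fun n _ => by ring

def FormNonneg (W : (Fin d → ℤ) → ℝ) : Prop :=
  ∀ (φ : (Fin d → ℤ) → ℝ) (s : Finset (Fin d → ℤ)), (∀ n ∉ s, φ n = 0) →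
    0 ≤ ∑ n ∈ s, φ n * schrodingerOp W φ n

def boundaryTerm (B : Finset (Fin d → ℤ)) (u : (Fin d → ℤ) → ℝ) : ℝ :=
  ∑ e ∈ unitVecs d, ∑ n ∈ B with n + e ∉ B, u n * u (n + e)

lemma schrodingerOp_indicator_apply (W u : (Fin d → ℤ) → ℝ) {B : Finset (Fin d → ℤ)}
    {n : Fin d → ℤ} (hn : n ∈ B) :
    schrodingerOp W ((B : Set (Fin d → ℤ)).indicator u) n
      = schrodingerOp W u n + ∑ e ∈ unitVecs d with n + e ∉ B, u (n + e) := by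
  have hnbr : ∑ e ∈ unitVecs d, (B : Set (Fin d → ℤ)).indicator u (n + e)
      = ∑ e ∈ unitVecs d with n + e ∈ B, u (n + e) := by
    rw [sum_filter]
    simp only [Set.indicator_apply, mem_coe]
  rw [schrodingerOp_eq, schrodingerOp_eq, Set.indicator_of_mem (mem_coe.mpr hn), hnbr,
    ← sum_filter_add_sum_filter_not (unitVecs d) (fun e => n + e ∈ B)]
  ring

theorem sum_mul_schrodingerOp_indicator (W u : (Fin d → ℤ) → ℝ)
    (B : Finset (Fin d → ℤ)) :
    ∑ n ∈ B, (B : Set (Fin d → ℤ)).indicator u n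
        * schrodingerOp W ((B : Set (Fin d → ℤ)).indicator u) n
      = ∑ n ∈ B, u n * schrodingerOp W u n + boundaryTerm B u := by
  have hboundary : boundaryTerm B u
      = ∑ n ∈ B, u n * ∑ e ∈ unitVecs d with n + e ∉ B, u (n + e) := by
    simp only [boundaryTerm, mul_sum, sum_filter, mul_ite, mul_zero]
    exact Finset.sum_comm
  rw [hboundary, ← sum_add_distrib]
  refine sum_congr rfl fun n hn => ?_
  rw [Set.indicator_of_mem (mem_coe.mpr hn), schrodingerOp_indicator_apply W u hn]
  ring

def cube (d R : ℕ) : Finset (Fin d → ℤ) :=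
  Fintype.piFinset fun _ => Icc (-(R : ℤ)) R

lemma mem_cube {R : ℕ} {n : Fin d → ℤ} : n ∈ cube d R ↔ ∀ j, |n j| ≤ R := by
  simp only [cube, Fintype.mem_piFinset, mem_Icc, abs_le]

lemma cube_mono : Monotone (cube d) := fun R R' h n hn =>
  mem_cube.mpr fun j => (mem_cube.mp hn j).trans (by exact_mod_cast h)

lemma add_mem_cube_succ {R : ℕ} {n e : Fin d → ℤ} (hn : n ∈ cube d R)
    (he : e ∈ unitVecs d) :
    n + e ∈ cube d (R + 1) :=
  mem_cube.mpr fun j => by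
    have := abs_add_le (n j) (e j)
    rw [Pi.add_apply]
    push_cast
    linarith [mem_cube.mp hn j, abs_apply_le_one_of_mem_unitVecs he j]

lemma exists_mem_cube (n : Fin d → ℤ) : ∃ R, n ∈ cube d R :=
  ⟨∑ j, (n j).natAbs, mem_cube.mpr fun j => by
    rw [Int.abs_eq_natAbs]
    exact_mod_cast single_le_sum (fun i _ => Nat.zero_le (n i).natAbs) (mem_univ j)⟩

lemma tendsto_cube_atTop : Tendsto (cube d) atTop atTop :=
  tendsto_atTop_finset_of_monotone cube_mono exists_mem_cube

lemma abs_sum_mul_comp_add_le (u : (Fin d → ℤ) → ℝ) {F S : Finset (Fin d → ℤ)}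
    {e : Fin d → ℤ} (hF : ∀ n ∈ F, n ∈ S ∧ n + e ∈ S) :
    |∑ n ∈ F, u n * u (n + e)| ≤ ∑ n ∈ S, u n ^ 2 := by
  have hleft : ∑ n ∈ F, u n ^ 2 ≤ ∑ n ∈ S, u n ^ 2 :=
    sum_le_sum_of_subset_of_nonneg (fun n hn => (hF n hn).1) fun _ _ _ => sq_nonneg _
  have hright : ∑ n ∈ F, u (n + e) ^ 2 ≤ ∑ n ∈ S, u n ^ 2 := by
    rw [← sum_image (f := fun m => u m ^ 2) fun _ _ _ _ h => add_right_cancel h]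
    exact sum_le_sum_of_subset_of_nonneg
      (fun m hm => by obtain ⟨n, hn, rfl⟩ := mem_image.mp hm; exact (hF n hn).2)
      fun _ _ _ => sq_nonneg _
  calc |∑ n ∈ F, u n * u (n + e)|
      ≤ ∑ n ∈ F, (u n ^ 2 + u (n + e) ^ 2) / 2 :=
        (abs_sum_le_sum_abs _ _).trans <| sum_le_sum fun n _ => by
          rw [abs_le]
          constructor <;> nlinarith [sq_nonneg (u n + u (n + e)), sq_nonneg (u n - u (n + e))]
    _ ≤ ∑ n ∈ S, u n ^ 2 := by
        rw [← sum_div, sum_add_distrib]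
        linarith

theorem abs_boundaryTerm_cube_le (u : (Fin d → ℤ) → ℝ) (R : ℕ) :
    |boundaryTerm (cube d (R + 1)) u|
      ≤ #(unitVecs d) * ∑ n ∈ cube d (R + 2) \ cube d R, u n ^ 2 := by
  set B := cube d (R + 1)
  set shell := cube d (R + 2) \ cube d R
  have hedge : ∀ e ∈ unitVecs d, ∀ n ∈ {n ∈ B | n + e ∉ B},
      n ∈ shell ∧ n + e ∈ shell := by
    intro e he n hn
    obtain ⟨hnB, hneB⟩ := mem_filter.mp hn
    exact ⟨mem_sdiff.mpr ⟨cube_mono (by omega) hnB, fun h => hneB (add_mem_cube_succ h he)⟩,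
      mem_sdiff.mpr ⟨add_mem_cube_succ hnB he, fun h => hneB (cube_mono (by omega) h)⟩⟩
  calc |boundaryTerm B u|
      ≤ ∑ e ∈ unitVecs d, |∑ n ∈ B with n + e ∉ B, u n * u (n + e)| :=
        abs_sum_le_sum_abs _ _
    _ ≤ ∑ _e ∈ unitVecs d, ∑ n ∈ shell, u n ^ 2 :=
        sum_le_sum fun e he => abs_sum_mul_comp_add_le u (hedge e he)
    _ = #(unitVecs d) * ∑ n ∈ shell, u n ^ 2 := by rw [sum_const, nsmul_eq_mul]

theorem tendsto_boundaryTerm_cube {u : (Fin d → ℤ) → ℝ} (hu : Summable fun n => u n ^ 2) :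
    Tendsto (fun R => boundaryTerm (cube d R) u) atTop (𝓝 0) := by
  set a : ℕ → ℝ := fun R => ∑ n ∈ cube d R, u n ^ 2
  have ha : Tendsto a atTop (𝓝 (∑' n, u n ^ 2)) := hu.hasSum.comp tendsto_cube_atTop
  have hshell : Tendsto (fun R => #(unitVecs d) * (a (R + 2) - a R)) atTop (𝓝 0) := by
    simpa using ((ha.comp (tendsto_add_atTop_nat 2)).sub ha).const_mul (#(unitVecs d) : ℝ)
  refine (tendsto_add_atTop_iff_nat 1).mp (squeeze_zero_norm (fun R => ?_) hshell)
  rw [Real.norm_eq_abs, ← sum_sdiff_eq_sub (cube_mono (by omega))]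
  exact abs_boundaryTerm_cube_le u R

lemma sum_single_one_mul {s : Finset (Fin d → ℤ)} {a : Fin d → ℤ} (ha : a ∈ s)
    (g : (Fin d → ℤ) → ℝ) :
    ∑ n ∈ s, (Pi.single a 1 : (Fin d → ℤ) → ℝ) n * g n = g a := by
  rw [sum_eq_single_of_mem a ha fun n _ hn => by simp [hn]]
  simp

namespace FormNonneg

variable {W : (Fin d → ℤ) → ℝ}

theorem le_boundaryTerm_add (hW : FormNonneg W) {u : (Fin d → ℤ) → ℝ}
    (hsub : ∀ n, u n * schrodingerOp W u n ≤ 0) {a : Fin d → ℤ} {R : ℕ}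
    (ha : a ∈ cube d R) (t : ℝ) :
    0 ≤ boundaryTerm (cube d (R + 1)) u + 2 * schrodingerOp W u a * t
      + (#(unitVecs d) + W a) * t ^ 2 := by
  set B := cube d (R + 1)
  have haB : a ∈ B := cube_mono (Nat.le_succ R) ha
  set f := (B : Set (Fin d → ℤ)).indicator u
  set δ : (Fin d → ℤ) → ℝ := Pi.single a 1
  have hf : ∀ n ∉ B, f n = 0 := fun n hn => Set.indicator_of_notMem (mt mem_coe.mp hn) u
  have hδ : ∀ n ∉ B, δ n = 0 := fun n hn =>
    Pi.single_eq_of_ne (ne_of_mem_of_not_mem haB hn).symm _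
  have hfa : schrodingerOp W f a = schrodingerOp W u a :=
    schrodingerOp_congr_apply (Set.indicator_of_mem (mem_coe.mpr haB) u) fun e he =>
      Set.indicator_of_mem (mem_coe.mpr (add_mem_cube_succ ha he)) u
  have hexpand : ∑ n ∈ B, (f + t • δ) n * schrodingerOp W (f + t • δ) n
      = ∑ n ∈ B, f n * schrodingerOp W f n + t * ∑ n ∈ B, f n * schrodingerOp W δ n
        + t * ∑ n ∈ B, δ n * schrodingerOp W f n
        + t ^ 2 * ∑ n ∈ B, δ n * schrodingerOp W δ n := by
    simp only [map_add, map_smul, Pi.add_apply, Pi.smul_apply, smul_eq_mul, mul_sum,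
      ← sum_add_distrib]
    exact sum_congr rfl fun n _ => by ring
  have hff : ∑ n ∈ B, f n * schrodingerOp W f n ≤ boundaryTerm B u := by
    rw [sum_mul_schrodingerOp_indicator]
    linarith [sum_nonpos fun n (_ : n ∈ B) => hsub n]
  have hfδ : ∑ n ∈ B, f n * schrodingerOp W δ n = schrodingerOp W u a := by
    rw [sum_mul_schrodingerOp_comm W hf hδ, ← hfa,
      ← sum_single_one_mul haB (schrodingerOp W f)]
    exact sum_congr rfl fun n _ => mul_comm _ _
  have hδf : ∑ n ∈ B, δ n * schrodingerOp W f n = schrodingerOp W u a := by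
    rw [sum_single_one_mul haB, hfa]
  have hδδ : ∑ n ∈ B, δ n * schrodingerOp W δ n = #(unitVecs d) + W a := by
    rw [sum_single_one_mul haB, schrodingerOp_single_self]
  have hform := hW (f + t • δ) B fun n hn => by simp [hf n hn, hδ n hn]
  rw [hexpand, hfδ, hδf, hδδ] at hform
  linarith

theorem schrodingerOp_eq_zero (hW : FormNonneg W) {u : (Fin d → ℤ) → ℝ}
    (hu : Summable fun n => u n ^ 2) (hsub : ∀ n, u n * schrodingerOp W u n ≤ 0)
    (a : Fin d → ℤ) : schrodingerOp W u a = 0 := by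
  obtain ⟨R, ha⟩ := exists_mem_cube a
  have hquad : ∀ t, 0 ≤ (#(unitVecs d) + W a) * (t * t) + 2 * schrodingerOp W u a * t + 0 := by
    intro t
    have hlim := ((tendsto_add_atTop_iff_nat 1).mpr (tendsto_boundaryTerm_cube hu)).add_const
      (2 * schrodingerOp W u a * t + (#(unitVecs d) + W a) * t ^ 2)
    have := ge_of_tendsto hlim <| eventually_atTop.mpr ⟨R, fun R' hR' => by
      simpa [add_assoc] using hW.le_boundaryTerm_add hsub (cube_mono hR' ha) t⟩
    linarith
  have := discrim_le_zero hquad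
  rw [discrim] at this
  nlinarith [sq_nonneg (2 * schrodingerOp W u a)]

theorem schrodingerOp_abs_eq_zero (hW : FormNonneg W) {ψ : (Fin d → ℤ) → ℝ}
    (hψ : Summable fun n => ψ n ^ 2) (heig : ∀ n, schrodingerOp W ψ n = 0)
    (n : Fin d → ℤ) :
    schrodingerOp W (fun m => |ψ m|) n = 0 :=
  hW.schrodingerOp_eq_zero (by simpa only [sq_abs] using hψ)
    (fun m => by simpa only [heig m, mul_zero] using abs_mul_schrodingerOp_abs_le W ψ m) n

end FormNonneg

theorem eq_zero_of_nonneg_of_schrodingerOp_eq_zero {W u : (Fin d → ℤ) → ℝ}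
    (hu : ∀ n, 0 ≤ u n) (heig : ∀ n, schrodingerOp W u n = 0) {a : Fin d → ℤ}
    (ha : u a = 0) (n : Fin d → ℤ) : u n = 0 :=
  lattice_induction (P := fun m => u m = 0) ha (fun m hm e he => by
    have hsum : ∑ e ∈ unitVecs d, u (m + e) = 0 := by
      simpa [schrodingerOp_eq, hm] using heig m
    exact (sum_eq_zero_iff_of_nonneg fun e _ => hu (m + e)).mp hsum e he) n

theorem FormNonneg.eq_zero_of_apply_eq_zero {W : (Fin d → ℤ) → ℝ} (hW : FormNonneg W)
    {ψ : (Fin d → ℤ) → ℝ} (hψ : Summable fun n => ψ n ^ 2)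
    (heig : ∀ n, schrodingerOp W ψ n = 0)
    {a : Fin d → ℤ} (ha : ψ a = 0) (n : Fin d → ℤ) : ψ n = 0 :=
  abs_eq_zero.mp <| eq_zero_of_nonneg_of_schrodingerOp_eq_zero (fun _ => abs_nonneg _)
    (hW.schrodingerOp_abs_eq_zero hψ heig) (abs_eq_zero.mpr ha) n

lemma summable_sq_sub_mul {α : Type*} {f g : α → ℝ} (hf : Summable fun n => f n ^ 2)
    (hg : Summable fun n => g n ^ 2) (c : ℝ) : Summable fun n => (f n - c * g n) ^ 2 :=
  ((hf.mul_left 2).add (hg.mul_left (2 * c ^ 2))).of_nonneg_of_le (fun _ => sq_nonneg _)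
    fun n => by nlinarith [sq_nonneg (f n + c * g n)]

lemma schrodingerOp_sub_const_apply (V ψ : (Fin d → ℤ) → ℝ) (E : ℝ) (n : Fin d → ℤ) :
    schrodingerOp (fun m => V m - E) ψ n = negLap ψ n + V n * ψ n - E * ψ n := by
  rw [schrodingerOp_apply]
  ring

theorem formNonneg_sub_const {V : (Fin d → ℤ) → ℝ} {E : ℝ}
    (hform : ∀ φ : (Fin d → ℤ) → ℝ, (Function.support φ).Finite →
      E * ∑ᶠ n, φ n ^ 2 ≤ ∑ᶠ n, (φ n * negLap φ n + V n * φ n ^ 2)) :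
    FormNonneg fun n => V n - E := by
  intro φ s hs
  have hsupp : Function.support φ ⊆ s := fun n hn => by_contra fun hns => hn (hs n hns)
  have hfin {F : (Fin d → ℤ) → ℝ} (hF : ∀ n, φ n = 0 → F n = 0) :
      ∑ᶠ n, F n = ∑ n ∈ s, F n :=
    finsum_eq_sum_of_support_subset F fun n hn => hsupp fun h => hn (hF n h)
  have h := hform φ (s.finite_toSet.subset hsupp)
  rw [hfin fun n h => by simp [h], hfin fun n h => by simp [h]] at h
  have hsplit : ∑ n ∈ s, φ n * schrodingerOp (fun m => V m - E) φ n
      = ∑ n ∈ s, (φ n * negLap φ n + V n * φ n ^ 2) - E * ∑ n ∈ s, φ n ^ 2 := by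
    rw [mul_sum, ← sum_sub_distrib]
    exact sum_congr rfl fun n _ => by rw [schrodingerOp_sub_const_apply]; ring
  linarith

end Lattice

/-- If the lowest spectral point `E = inf σ(H_V) > -∞` of the discrete Schrödinger
operator `H_V = -Δ + V` is an eigenvalue (expressed by: `E` admits an `ℓ²`
eigenvector, and `H_V - E ≥ 0` as a quadratic form on finitely supported vectors),
then the corresponding eigenvector can be chosen strictly positive and `E` is a
simple eigenvalue: every `ℓ²` eigenvector for `E` is a multiple of it. -/
theorem ground_state_simple_and_positive {d : ℕ} (V : (Fin d → ℤ) → ℝ) (E : ℝ)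
    (hform : ∀ φ : (Fin d → ℤ) → ℝ, (Function.support φ).Finite →
      E * ∑ᶠ n, φ n ^ 2 ≤ ∑ᶠ n, (φ n * negLap φ n + V n * φ n ^ 2))
    (heig : ∃ ψ : (Fin d → ℤ) → ℝ, ψ ≠ 0 ∧ Summable (fun n => ψ n ^ 2) ∧
      ∀ n, negLap ψ n + V n * ψ n = E * ψ n) :
    ∃ ψ : (Fin d → ℤ) → ℝ,
      (∀ n, 0 < ψ n) ∧ Summable (fun n => ψ n ^ 2) ∧
      (∀ n, negLap ψ n + V n * ψ n = E * ψ n) ∧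
      (∀ φ : (Fin d → ℤ) → ℝ, Summable (fun n => φ n ^ 2) →
        (∀ n, negLap φ n + V n * φ n = E * φ n) →
        ∃ c : ℝ, ∀ n, φ n = c * ψ n) := by
  set H := schrodingerOp fun m => V m - E
  have hW := formNonneg_sub_const hform
  have eig_iff (φ : (Fin d → ℤ) → ℝ) (n) :
      negLap φ n + V n * φ n = E * φ n ↔ H φ n = 0 := by
    rw [schrodingerOp_sub_const_apply, sub_eq_zero]
  obtain ⟨ψ, hψ0, hψ, heig⟩ := heig
  replace heig n := (eig_iff ψ n).mp (heig n)
  have hpos (n) : 0 < |ψ n| :=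
    abs_pos.mpr fun h => hψ0 (funext (hW.eq_zero_of_apply_eq_zero hψ heig h))
  refine ⟨fun n => |ψ n|, hpos, by simpa only [sq_abs] using hψ,
    fun n => (eig_iff _ n).mpr (hW.schrodingerOp_abs_eq_zero hψ heig n), fun φ hφ hφeig => ?_⟩
  set c := φ 0 / |ψ 0|
  have hη : ∀ n, H (φ - c • fun m => |ψ m|) n = 0 := fun n => by
    rw [map_sub, map_smul, Pi.sub_apply, Pi.smul_apply, (eig_iff φ n).mp (hφeig n),
      hW.schrodingerOp_abs_eq_zero hψ heig n, smul_zero, sub_zero]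
  have hη0 : φ 0 - c * |ψ 0| = 0 := by
    rw [div_mul_cancel₀ _ (hpos 0).ne', sub_self]
  exact ⟨c, fun n => sub_eq_zero.mp <| hW.eq_zero_of_apply_eq_zero
    (summable_sq_sub_mul hφ (by simpa only [sq_abs] using hψ) c) hη hη0 n⟩
end
end

section
/- Define x_k := log_k |n+δ_j| / log_k |n| for iterated logarithms. Then for k ≥ 1 the recurrence x_k = 1 + (log x_{k-1}) / log_k |n| holds, and with N_j := (2n_j + 1)/|n|², one has the asymptotic expansion x_k = 1 + N_j/(2 ℓ_1 … ℓ_k) - (N_j²/(4 ℓ_1 … ℓ_k)) (1 + (1/2) Σ_{r=1}^{k-1} 1/(ℓ_1 … ℓ_r)) + O(N_j³) as |n| → ∞, where ℓ_k := log_k |n|. -/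
open scoped BigOperators

noncomputable section

/-- Iterated logarithm: `itlog 0 x = x`, `itlog (k+1) x = log (itlog k x)`. -/
def itlog (k : ℕ) (x : ℝ) : ℝ := Real.log^[k] x

/-- `x_k = log_k|n+δ_j| / log_k|n|`. -/
def xq {d : ℕ} (j : Fin d) (k : ℕ) (n : Fin d → ℤ) : ℝ :=
  itlog k (znorm (n + Pi.single j 1)) / itlog k (znorm n)

/-- `N_j = (2n_j + 1)/|n|²`. -/
def Nq {d : ℕ} (j : Fin d) (n : Fin d → ℤ) : ℝ := (2 * (n j : ℝ) + 1) / znorm n ^ 2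

/-- Product `ℓ_1 ⋯ ℓ_k` of iterated logarithms of `|n|`. -/
def Pq {d : ℕ} (k : ℕ) (n : Fin d → ℤ) : ℝ := ∏ i ∈ Finset.Icc 1 k, itlog i (znorm n)

/-!
Write `ℓ_k = log_k |n|` and `N = N_j`. Since `|n+δ_j|² = |n|²(1+N)`, we have
`log x_0 = log(1+N)/2`, and taking the logarithm of `log_k |n+δ_j| = x_k ℓ_k` gives the
recurrence `x_{k+1} = 1 + log x_k / ℓ_{k+1}`. So an expansion of `log x_k` to second order in `N`
yields one of `x_{k+1}`, and `log (1+ε) = ε - ε²/2 + O(ε³)` turns it back into an expansion of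
`log x_{k+1}`. The coefficients stay bounded because every `ℓ_i` tends to infinity.
-/

open Filter Asymptotics Topology

theorem isBigO_log_one_add_sub_sq :
    (fun y : ℝ => Real.log (1 + y) - (y - y ^ 2 / 2)) =O[𝓝 0] fun y => y ^ 3 := by
  refine IsBigO.of_bound 2 ?_
  filter_upwards [Metric.ball_mem_nhds (0 : ℝ) one_half_pos] with y hy
  rw [Metric.mem_ball, dist_zero_right, Real.norm_eq_abs] at hy
  have h := Real.abs_log_sub_add_sum_range_le (x := -y) (by rw [abs_neg]; linarith) 2
  have hsum : ∑ i ∈ Finset.range 2, (-y) ^ (i + 1) / (i + 1) = -(y - y ^ 2 / 2) := by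
    simp only [Finset.sum_range_succ, Finset.sum_range_zero]; push_cast; ring
  rw [hsum, sub_neg_eq_add, neg_add_eq_sub, abs_neg] at h
  rw [Real.norm_eq_abs, Real.norm_eq_abs, abs_pow]
  calc |Real.log (1 + y) - (y - y ^ 2 / 2)|
    _ ≤ |y| ^ (2 + 1) / (1 - |y|) := h
    _ ≤ |y| ^ 3 / (1 / 2) := by gcongr; linarith
    _ = 2 * |y| ^ 3 := by ring

theorem Asymptotics.IsBigO.mul_isBigO_one {α : Type*} {l : Filter α} {f g w : α → ℝ}
    (hf : f =O[l] g) (hw : w =O[l] fun _ => (1 : ℝ)) : (fun x => f x * w x) =O[l] g :=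
  (hf.mul hw).congr_right fun _ => mul_one _

theorem isBigO_one_div_one_of_one_le {α : Type*} {l : Filter α} {f : α → ℝ}
    (hf : ∀ᶠ x in l, 1 ≤ f x) : (fun x => 1 / f x) =O[l] fun _ => (1 : ℝ) := by
  refine IsBigO.of_bound 1 (hf.mono fun x hx => ?_)
  rw [norm_one, mul_one, Real.norm_of_nonneg (by positivity)]
  exact div_le_one_of_le₀ hx (zero_le_one.trans hx)

theorem isBigO_log_sub_second_order {α : Type*} {l : Filter α} {N u v X : α → ℝ}
    (hN : Tendsto N l (𝓝 0)) (hu : u =O[l] fun _ => (1 : ℝ)) (hv : v =O[l] fun _ => (1 : ℝ))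
    (hX : (fun x => X x - (1 + N x * u x + N x ^ 2 * v x)) =O[l] fun x => N x ^ 3) :
    (fun x => Real.log (X x) - (N x * u x + N x ^ 2 * (v x - u x ^ 2 / 2))) =O[l]
      fun x => N x ^ 3 := by
  set a := fun x => N x * u x + N x ^ 2 * v x
  set ε := fun x => X x - 1
  have hN1 : N =O[l] fun _ => (1 : ℝ) := hN.isBigO_one ℝ
  have hN3 : (fun x => N x ^ 3) =O[l] N :=
    ((isBigO_refl N l).mul_isBigO_one (hN1.mul_isBigO_one hN1)).congr_left fun x => by ring
  have ha : a =O[l] N := by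
    refine ((isBigO_refl N l).mul_isBigO_one (hu.add (hN1.mul_isBigO_one hv))).congr_left
      fun x => ?_
    simp only [a]; ring
  have hεa : (fun x => ε x - a x) =O[l] fun x => N x ^ 3 := hX.congr_left fun x => by
    simp only [ε, a]; ring
  have hε : ε =O[l] N := ((hεa.trans hN3).add ha).congr_left fun x => by ring
  have htaylor : (fun x => Real.log (X x) - (ε x - ε x ^ 2 / 2)) =O[l] fun x => N x ^ 3 := by
    refine ((isBigO_log_one_add_sub_sq.comp_tendsto (hε.trans_tendsto hN)).trans
      (hε.pow 3)).congr_left fun x => ?_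
    simp only [Function.comp, ε, add_sub_cancel]
  have hsq : (fun x => ε x ^ 2 - a x ^ 2) =O[l] fun x => N x ^ 3 :=
    (hεa.mul_isBigO_one ((hε.add ha).trans hN1)).congr_left fun x => by ring
  have ha2 : (fun x => a x ^ 2 - N x ^ 2 * u x ^ 2) =O[l] fun x => N x ^ 3 := by
    have hbdd : (fun x => 2 * (u x * v x) + N x * (v x * v x)) =O[l] fun _ => (1 : ℝ) :=
      ((hu.mul_isBigO_one hv).const_mul_left 2).add (hN1.mul_isBigO_one (hv.mul_isBigO_one hv))
    refine ((isBigO_refl (fun x => N x ^ 3) l).mul_isBigO_one hbdd).congr_left fun x => ?_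
    simp only [a]; ring
  refine (((htaylor.add hεa).sub (hsq.const_mul_left (1 / 2))).sub
    (ha2.const_mul_left (1 / 2))).congr_left fun x => ?_
  simp only [a, ε]; ring

theorem itlog_succ (k : ℕ) (x : ℝ) : itlog (k + 1) x = Real.log (itlog k x) :=
  Function.iterate_succ_apply' _ _ _

theorem tendsto_itlog_atTop (k : ℕ) : Tendsto (itlog k) atTop atTop := by
  induction k with
  | zero => exact tendsto_id
  | succ k ih => exact (Real.tendsto_log_atTop.comp ih).congr fun x => (itlog_succ k x).symm

section Lattice

variable {d : ℕ}

theorem abs_le_znorm (v : Fin d → ℤ) (i : Fin d) : |(v i : ℝ)| ≤ znorm v :=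
  Real.abs_le_sqrt <| Finset.single_le_sum (f := fun j => ((v j : ℝ)) ^ 2)
    (fun _ _ => sq_nonneg _) (Finset.mem_univ i)

theorem tendsto_znorm_cofinite : Tendsto (znorm (d := d)) cofinite atTop := by
  refine tendsto_atTop_mono (fun n => ?_)
    ((cocompact_eq_cofinite (Fin d → ℤ)) ▸ tendsto_norm_cocompact_atTop)
  refine (pi_norm_le_iff_of_nonneg (Real.sqrt_nonneg _)).2 fun i => ?_
  rw [Int.norm_eq_abs]
  exact abs_le_znorm n i

theorem znorm_add_single_sq (j : Fin d) (n : Fin d → ℤ) :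
    znorm (n + Pi.single j 1) ^ 2 = znorm n ^ 2 + (2 * (n j : ℝ) + 1) := by
  have hsq : ∀ v : Fin d → ℤ, znorm v ^ 2 = ∑ i, ((v i : ℝ)) ^ 2 := fun v =>
    Real.sq_sqrt (Finset.sum_nonneg fun _ _ => sq_nonneg _)
  have hoff : ∀ i ∈ Finset.univ.erase j,
      ((n + Pi.single j 1 : Fin d → ℤ) i : ℝ) ^ 2 = (n i : ℝ) ^ 2 := fun i hi => by
    rw [Pi.add_apply, Pi.single_eq_of_ne (Finset.ne_of_mem_erase hi), add_zero]
  rw [hsq, hsq, ← Finset.add_sum_erase _ _ (Finset.mem_univ j),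
    ← Finset.add_sum_erase _ _ (Finset.mem_univ j), Finset.sum_congr rfl hoff, Pi.add_apply,
    Pi.single_eq_same]
  push_cast
  ring

theorem tendsto_itlog_znorm (k : ℕ) :
    Tendsto (fun n : Fin d → ℤ => itlog k (znorm n)) cofinite atTop :=
  (tendsto_itlog_atTop k).comp tendsto_znorm_cofinite

theorem tendsto_itlog_znorm_add_single (j : Fin d) (k : ℕ) :
    Tendsto (fun n : Fin d → ℤ => itlog k (znorm (n + Pi.single j 1))) cofinite atTop :=
  (tendsto_itlog_znorm k).comp (add_left_injective _).tendsto_cofinite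

theorem tendsto_Nq (j : Fin d) : Tendsto (Nq j) cofinite (𝓝 0) := by
  have hbound : ∀ᶠ n in cofinite, ‖Nq j n‖ ≤ 3 * (znorm n)⁻¹ := by
    filter_upwards [tendsto_znorm_cofinite.eventually_ge_atTop 1] with n hn
    have hnj := abs_le_znorm n j
    rw [Real.norm_eq_abs, Nq, abs_div, abs_of_nonneg (sq_nonneg (znorm n)),
      div_le_iff₀ (by positivity)]
    calc |2 * (n j : ℝ) + 1| ≤ 2 * |(n j : ℝ)| + 1 := by
          simpa [abs_mul] using abs_add_le (2 * (n j : ℝ)) 1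
      _ ≤ 3 * (znorm n)⁻¹ * znorm n ^ 2 := by
          rw [pow_two, ← mul_assoc, mul_assoc 3, inv_mul_cancel₀ (by positivity)]; linarith
  exact squeeze_zero_norm' hbound
    (by simpa using (tendsto_inv_atTop_zero.comp tendsto_znorm_cofinite).const_mul 3)

theorem Pq_zero (n : Fin d → ℤ) : Pq 0 n = 1 := by
  simp [Pq]

theorem Pq_succ (k : ℕ) (n : Fin d → ℤ) : Pq (k + 1) n = Pq k n * itlog (k + 1) (znorm n) :=
  Finset.prod_Icc_succ_top (Nat.le_add_left 1 k) _

theorem eventually_one_le_Pq (k : ℕ) : ∀ᶠ n : Fin d → ℤ in cofinite, 1 ≤ Pq k n :=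
  ((eventually_all_finset _).2 fun i _ => (tendsto_itlog_znorm i).eventually_ge_atTop 1).mono
    fun _ => Finset.one_le_prod

/-- `Sq k` is the bracket in the expansion of `x_{k+1}`. -/
def Sq (k : ℕ) (n : Fin d → ℤ) : ℝ := 1 + (1 / 2) * ∑ r ∈ Finset.Icc 1 k, 1 / Pq r n

theorem Sq_zero (n : Fin d → ℤ) : Sq 0 n = 1 := by
  simp [Sq]

theorem Sq_succ (k : ℕ) (n : Fin d → ℤ) : Sq (k + 1) n = Sq k n + 1 / (2 * Pq (k + 1) n) := by
  rw [Sq, Sq, Finset.sum_Icc_succ_top (Nat.le_add_left 1 k)]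
  ring

theorem isBigO_Sq_one (k : ℕ) : Sq (d := d) k =O[cofinite] fun _ => (1 : ℝ) :=
  (isBigO_refl _ _).add ((IsBigO.fun_sum fun r _ =>
    isBigO_one_div_one_of_one_le (eventually_one_le_Pq r)).const_mul_left _)

theorem xq_succ_eventuallyEq (j : Fin d) (k : ℕ) :
    ∀ᶠ n in cofinite, xq j (k + 1) n = 1 + Real.log (xq j k n) / itlog (k + 1) (znorm n) := by
  filter_upwards [(tendsto_itlog_znorm k).eventually_ne_atTop 0,
    (tendsto_itlog_znorm_add_single j k).eventually_ne_atTop 0,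
    (tendsto_itlog_znorm (k + 1)).eventually_ne_atTop 0] with n h h' hlog
  rw [itlog_succ] at hlog
  simp only [xq, itlog_succ, Real.log_div h' h]
  field_simp
  ring

theorem log_xq_zero_eventuallyEq (j : Fin d) :
    ∀ᶠ n in cofinite, Real.log (xq j 0 n) = Real.log (1 + Nq j n) / 2 := by
  filter_upwards [tendsto_znorm_cofinite.eventually_gt_atTop 0] with n hn
  have hsq : xq j 0 n ^ 2 = 1 + Nq j n := by
    simp only [xq, itlog, Function.iterate_zero_apply, div_pow, znorm_add_single_sq, Nq]
    field_simp
  rw [← hsq, Real.log_pow]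
  push_cast
  ring

theorem isBigO_xq_succ (j : Fin d) (k : ℕ)
    (hlog : (fun n => Real.log (xq j k n)
        - (Nq j n / (2 * Pq k n) - Nq j n ^ 2 / (4 * Pq k n) * Sq k n))
      =O[cofinite] fun n => Nq j n ^ 3) :
    (fun n => xq j (k + 1) n
        - (1 + Nq j n / (2 * Pq (k + 1) n) - Nq j n ^ 2 / (4 * Pq (k + 1) n) * Sq k n))
      =O[cofinite] fun n => Nq j n ^ 3 := by
  have hinv := isBigO_one_div_one_of_one_le
    ((tendsto_itlog_znorm (d := d) (k + 1)).eventually_ge_atTop 1)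
  refine EventuallyEq.trans_isBigO ?_ (hlog.mul_isBigO_one hinv)
  filter_upwards [xq_succ_eventuallyEq j k] with n hn
  rw [hn, Pq_succ]
  ring

theorem isBigO_log_xq (j : Fin d) (k : ℕ) :
    (fun n => Real.log (xq j k n)
        - (Nq j n / (2 * Pq k n) - Nq j n ^ 2 / (4 * Pq k n) * Sq k n))
      =O[cofinite] fun n => Nq j n ^ 3 := by
  induction k with
  | zero =>
    refine EventuallyEq.trans_isBigO ?_
      ((isBigO_log_one_add_sub_sq.comp_tendsto (tendsto_Nq j)).const_mul_left (1 / 2))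
    filter_upwards [log_xq_zero_eventuallyEq j] with n hn
    simp only [hn, Pq_zero, Sq_zero, Function.comp]
    ring
  | succ k ih =>
    have hP := isBigO_one_div_one_of_one_le (eventually_one_le_Pq (d := d) (k + 1))
    have hv : (fun n => -1 / 4 * (Sq k n * (1 / Pq (k + 1) n))) =O[cofinite] fun _ => (1 : ℝ) :=
      ((isBigO_Sq_one k).mul_isBigO_one hP).const_mul_left _
    refine (isBigO_log_sub_second_order (tendsto_Nq j) (hP.const_mul_left (1 / 2)) hv
      ((isBigO_xq_succ j k ih).congr_left fun n => by ring)).congr_left fun n => ?_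
    rw [Sq_succ]
    ring

end Lattice

/-- For `k ≥ 1`, the recurrence `x_k = 1 + (log x_{k-1})/log_k|n|` holds for `|n|`
large, together with the asymptotic expansion
`x_k = 1 + N_j/(2ℓ_1⋯ℓ_k) - (N_j²/(4ℓ_1⋯ℓ_k))(1 + ½ Σ_{r=1}^{k-1} 1/(ℓ_1⋯ℓ_r)) + O(N_j³)`
as `|n| → ∞`. -/
theorem xq_recurrence_and_expansion {d : ℕ} (j : Fin d) (k : ℕ) (hk : 1 ≤ k) :
    (∀ᶠ n : Fin d → ℤ in Filter.cofinite,
      xq j k n = 1 + Real.log (xq j (k - 1) n) / itlog k (znorm n)) ∧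
    (fun n : Fin d → ℤ =>
        xq j k n - (1 + Nq j n / (2 * Pq k n)
          - Nq j n ^ 2 / (4 * Pq k n)
            * (1 + (1 / 2) * ∑ r ∈ Finset.Icc 1 (k - 1), 1 / Pq r n)))
      =O[Filter.cofinite] (fun n : Fin d → ℤ => Nq j n ^ 3) := by
  obtain ⟨m, rfl⟩ : ∃ m, k = m + 1 := ⟨k - 1, (Nat.succ_pred_eq_of_pos hk).symm⟩
  simp only [Nat.add_sub_cancel]
  exact ⟨xq_succ_eventuallyEq j m, isBigO_xq_succ j m (isBigO_log_xq j m)⟩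
end
end

section
/- Let a_n := |n|^{-γ} for n ≠ 0, a_0 := 1, with γ > 0, and define V_n := (Δa)_n / a_n. Then for every real-valued finitely supported ψ ∈ ℓ²(Z^d), writing φ_n := ψ_n / a_n, one has the ground-state representation ⟨ψ, H_V ψ⟩ = Σ_{j=1}^d Σ_{n ∈ Z^d} a_n a_{n-δ_j} (φ_n - φ_{n-δ_j})² ≥ 0; hence H_V = -Δ + V is a nonnegative operator. -/
open scoped BigOperators

noncomputable section

/-- The discrete Laplacian `(Δψ)_n = Σ_{|m-n|=1} (ψ_m - ψ_n)`. -/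
def lap {d : ℕ} (ψ : (Fin d → ℤ) → ℝ) (n : Fin d → ℤ) : ℝ :=
  ∑ᶠ (m : Fin d → ℤ) (_ : znorm (m - n) = 1), (ψ m - ψ n)

/-- `a_n = |n|^{-γ}` for `n ≠ 0`, `a_0 = 1`. -/
def aSeq (d : ℕ) (γ : ℝ) (n : Fin d → ℤ) : ℝ :=
  if n = 0 then 1 else znorm n ^ (-γ)

/-- The potential `V_n = (Δa)_n / a_n`. -/
def Vpot (d : ℕ) (γ : ℝ) (n : Fin d → ℤ) : ℝ := lap (aSeq d γ) n / aSeq d γ n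

variable {d : ℕ}

lemma znorm_eq_one_iff_s18 (v : Fin d → ℤ) :
    znorm v = 1 ↔ ∃ j, v = Pi.single j 1 ∨ v = Pi.single j (-1) := by
  have hnn : (0:ℝ) ≤ ∑ j, ((v j : ℝ))^2 := Finset.sum_nonneg fun j _ => sq_nonneg _
  have hcast : (∑ j, ((v j : ℝ))^2) = ((∑ j, (v j)^2 : ℤ) : ℝ) := by push_cast; ring
  constructor
  · intro h
    have h1 : (∑ j, ((v j : ℝ))^2) = 1 := by
      have := Real.sq_sqrt hnn
      rw [znorm] at h
      nlinarith
    have hz : (∑ j, (v j)^2 : ℤ) = 1 := by exact_mod_cast hcast ▸ h1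
    have hex : ∃ j, v j ≠ 0 := by
      by_contra hc
      push_neg at hc
      simp [hc] at hz
    obtain ⟨j, hj⟩ := hex
    have hsplit : (v j)^2 + ∑ k ∈ Finset.univ.erase j, (v k)^2 = ∑ k, (v k)^2 :=
      Finset.add_sum_erase Finset.univ (fun k => (v k)^2) (Finset.mem_univ j)
    have hone : 1 ≤ (v j)^2 := by
      have := Int.one_le_abs hj
      nlinarith [sq_abs (v j)]
    have hrnn : (0:ℤ) ≤ ∑ k ∈ Finset.univ.erase j, (v k)^2 :=
      Finset.sum_nonneg fun k _ => sq_nonneg _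
    have hrest : ∑ k ∈ Finset.univ.erase j, (v k)^2 = 0 := by linarith
    have hsq : (v j)^2 = 1 := by linarith
    have hzero : ∀ k, k ≠ j → v k = 0 := by
      intro k hk
      have := (Finset.sum_eq_zero_iff_of_nonneg fun k _ => sq_nonneg (v k)).mp hrest k
        (Finset.mem_erase.mpr ⟨hk, Finset.mem_univ k⟩)
      exact pow_eq_zero_iff (n := 2) (by norm_num) |>.mp this
    have hv : v = Pi.single j (v j) := by
      funext k
      by_cases hk : k = j
      · subst hk; simp
      · simp [Pi.single_eq_of_ne hk, hzero k hk]
    rcases Int.mul_eq_one_iff_eq_one_or_neg_one.mp (by rw [← sq]; exact hsq) with ⟨h1',_⟩ | ⟨h1',_⟩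
    · exact ⟨j, Or.inl (by rw [hv, h1'])⟩
    · exact ⟨j, Or.inr (by rw [hv, h1'])⟩
  · have hsum : ∀ (c : ℤ), c^2 = 1 → ∀ j : Fin d, znorm (Pi.single j c) = 1 := by
      intro c hc j
      rw [znorm, Finset.sum_eq_single_of_mem j (Finset.mem_univ j)
        (fun k _ hk => by simp [Pi.single_eq_of_ne hk])]
      have : (((Pi.single j c : Fin d → ℤ) j : ℝ))^2 = 1 := by
        rw [Pi.single_eq_same]; exact_mod_cast congrArg (Int.cast : ℤ → ℝ) hc
      rw [this, Real.sqrt_one]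
    rintro ⟨j, h | h⟩ <;> subst h
    · exact hsum 1 (by norm_num) j
    · exact hsum (-1) (by norm_num) j

lemma psingle_neg (j : Fin d) :
    (Pi.single j (-1 : ℤ) : Fin d → ℤ) = -(Pi.single j 1 : Fin d → ℤ) := by
  funext k
  by_cases hk : k = j
  · subst hk; simp
  · simp [Pi.single_eq_of_ne hk]

lemma single_inj : Function.Injective (fun j : Fin d => (Pi.single j (1:ℤ))) := by
  intro j k h
  by_contra hjk
  have := congrFun h j
  simp [Pi.single_eq_same, Pi.single_eq_of_ne hjk] at this

lemma lap_eq (ψ : (Fin d → ℤ) → ℝ) (n : Fin d → ℤ) :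
    lap ψ n = ∑ j, ((ψ (n + Pi.single j 1) - ψ n) + (ψ (n - Pi.single j 1) - ψ n)) := by
  classical
  have hset : {m : Fin d → ℤ | znorm (m - n) = 1} =
      ↑((Finset.univ.image fun j : Fin d => n + Pi.single j 1) ∪
        (Finset.univ.image fun j : Fin d => n - Pi.single j 1)) := by
    ext m
    simp only [Set.mem_setOf_eq, znorm_eq_one_iff_s18, Finset.coe_union, Set.mem_union,
      Finset.coe_image, Finset.coe_univ, Set.image_univ, Set.mem_range]
    constructor
    · rintro ⟨j, h | h⟩
      · exact Or.inl ⟨j, by rw [← h]; abel⟩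
      · refine Or.inr ⟨j, ?_⟩
        rw [psingle_neg] at h
        have hm : m = -Pi.single j 1 + n := sub_eq_iff_eq_add.mp h
        rw [hm]; abel
    · rintro (⟨j, h⟩ | ⟨j, h⟩)
      · exact ⟨j, Or.inl (by rw [← h]; abel)⟩
      · exact ⟨j, Or.inr (by rw [← h, psingle_neg]; abel)⟩
  have hdisj : Disjoint (Finset.univ.image fun j : Fin d => n + Pi.single j 1)
      (Finset.univ.image fun j : Fin d => n - Pi.single j 1) := by
    rw [Finset.disjoint_left]
    rintro m hm1 hm2
    simp only [Finset.mem_image, Finset.mem_univ, true_and] at hm1 hm2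
    obtain ⟨j, hj⟩ := hm1
    obtain ⟨k, hk⟩ := hm2
    have h := hj.trans hk.symm
    have h2 := congrFun h j
    simp only [Pi.add_apply, Pi.sub_apply, Pi.single_eq_same] at h2
    by_cases hjk : k = j
    · subst hjk; rw [Pi.single_eq_same] at h2; omega
    · rw [Pi.single_eq_of_ne (Ne.symm hjk)] at h2; omega
  have h1 : lap ψ n = ∑ᶠ m ∈ {m : Fin d → ℤ | znorm (m - n) = 1}, (ψ m - ψ n) := rfl
  rw [h1, hset, finsum_mem_coe_finset, Finset.sum_union hdisj,
    Finset.sum_image (fun j _ k _ h => single_inj (add_right_injective n h)),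
    Finset.sum_image (fun j _ k _ h => single_inj (sub_right_inj.mp h)),
    ← Finset.sum_add_distrib]

end

lemma aSeq_pos (γ : ℝ) (n : Fin d → ℤ) : 0 < aSeq d γ n := by
  rw [aSeq]
  split
  · exact one_pos
  · rename_i hn
    apply Real.rpow_pos_of_pos
    rw [znorm, Real.sqrt_pos]
    have hex : ∃ j, n j ≠ 0 := by
      by_contra hc
      push_neg at hc
      exact hn (funext fun j => hc j)
    obtain ⟨j, hj⟩ := hex
    refine Finset.sum_pos' (fun k _ => sq_nonneg _) ⟨j, Finset.mem_univ j, ?_⟩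
    have : (n j : ℝ) ≠ 0 := Int.cast_ne_zero.mpr hj
    positivity


/-- Ground-state representation: for finitely supported real `ψ` and `φ = ψ/a`,
`⟨ψ, H_V ψ⟩ = Σ_j Σ_n a_n a_{n-δ_j} (φ_n - φ_{n-δ_j})² ≥ 0`; hence `H_V ≥ 0`. -/
theorem ground_state_representation (d : ℕ) (γ : ℝ) (hγ : 0 < γ)
    (ψ : (Fin d → ℤ) → ℝ) (hψ : (Function.support ψ).Finite) :
    (∑ᶠ n : Fin d → ℤ, ψ n * (-lap ψ n + Vpot d γ n * ψ n))
      = ∑ j : Fin d, ∑ᶠ n : Fin d → ℤ,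
          aSeq d γ n * aSeq d γ (n - Pi.single j 1) *
            (ψ n / aSeq d γ n - ψ (n - Pi.single j 1) / aSeq d γ (n - Pi.single j 1)) ^ 2 ∧
    0 ≤ ∑ᶠ n : Fin d → ℤ, ψ n * (-lap ψ n + Vpot d γ n * ψ n) := by
  classical
  set a := aSeq d γ with ha
  have hapos : ∀ n, 0 < a n := aSeq_pos γ
  have hane : ∀ n, a n ≠ 0 := fun n => (hapos n).ne'
  -- finiteness helpers
  have hsupp : ∀ (F : (Fin d → ℤ) → ℝ), (∀ n, ψ n = 0 → F n = 0) →
      (Function.support F).Finite := by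
    intro F h
    apply hψ.subset
    intro n hn
    simp only [Function.mem_support] at hn ⊢
    intro h0
    exact hn (h n h0)
  have hpre : ∀ j : Fin d, (Function.support fun n : Fin d → ℤ => ψ (n - Pi.single j 1)).Finite := by
    intro j
    have hinj : Function.Injective (fun n : Fin d → ℤ => n - Pi.single j 1) := by
      intro x y h
      have := congrArg (· + Pi.single j 1) h
      simpa using this
    have : (Function.support fun n : Fin d → ℤ => ψ (n - Pi.single j 1)) ⊆
        (fun n : Fin d → ℤ => n - Pi.single j 1) ⁻¹' Function.support ψ := fun n hn => hn
    exact (hψ.preimage hinj.injOn).subset this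
  have hsupp' : ∀ (j : Fin d) (F : (Fin d → ℤ) → ℝ),
      (∀ n, ψ (n - Pi.single j 1) = 0 → F n = 0) → (Function.support F).Finite := by
    intro j F h
    apply (hpre j).subset
    intro n hn
    simp only [Function.mem_support] at hn ⊢
    intro h0
    exact hn (h n h0)
  have haddsupp : ∀ (f g : (Fin d → ℤ) → ℝ), (Function.support f).Finite →
      (Function.support g).Finite → (Function.support fun n => f n + g n).Finite := by
    intro f g hf hg
    apply (hf.union hg).subset
    intro n hn
    simp only [Function.mem_support] at hn
    by_contra hc
    simp only [Set.mem_union, Function.mem_support, not_or, not_not] at hc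
    rw [hc.1, hc.2, add_zero] at hn
    exact hn rfl
  -- shift invariance of finsum
  have hshift : ∀ (f : (Fin d → ℤ) → ℝ) (c : Fin d → ℤ), (∑ᶠ n, f (n + c)) = ∑ᶠ n, f n :=
    fun f c => finsum_comp_equiv (Equiv.addRight c)
  have hAshift : ∀ j : Fin d,
      (∑ᶠ n, a n * (ψ (n - Pi.single j 1) ^ 2 / a (n - Pi.single j 1)))
        = ∑ᶠ n, a (n + Pi.single j 1) * (ψ n ^ 2 / a n) := by
    intro j
    calc (∑ᶠ n, a n * (ψ (n - Pi.single j 1) ^ 2 / a (n - Pi.single j 1)))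
        = ∑ᶠ n, (fun m => a (m + Pi.single j 1) * (ψ m ^ 2 / a m)) (n + (-Pi.single j 1)) :=
          finsum_congr fun n => by simp [sub_eq_add_neg]
      _ = ∑ᶠ n, (fun m => a (m + Pi.single j 1) * (ψ m ^ 2 / a m)) n :=
          hshift (fun m => a (m + Pi.single j 1) * (ψ m ^ 2 / a m)) (-Pi.single j 1)
      _ = ∑ᶠ n, a (n + Pi.single j 1) * (ψ n ^ 2 / a n) := rfl
  have hCD : ∀ j : Fin d,
      (∑ᶠ n, ψ n * ψ (n + Pi.single j 1)) = ∑ᶠ n, ψ n * ψ (n - Pi.single j 1) := by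
    intro j
    calc (∑ᶠ n, ψ n * ψ (n + Pi.single j 1))
        = ∑ᶠ n, (fun m => ψ m * ψ (m + Pi.single j 1)) n := rfl
      _ = ∑ᶠ n, (fun m => ψ m * ψ (m + Pi.single j 1)) (n + (-Pi.single j 1)) := (hshift _ _).symm
      _ = ∑ᶠ n, ψ n * ψ (n - Pi.single j 1) :=
          finsum_congr fun n => by
            simp only [neg_add_cancel_right, ← sub_eq_add_neg]
            ring
  -- pointwise expansion
  have hexpand : ∀ n, ψ n * (-lap ψ n + Vpot d γ n * ψ n)
      = ∑ j : Fin d, ((a (n + Pi.single j 1) + a (n - Pi.single j 1)) * (ψ n ^ 2 / a n)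
          - (ψ n * ψ (n + Pi.single j 1) + ψ n * ψ (n - Pi.single j 1))) := by
    intro n
    rw [Vpot, lap_eq ψ n, lap_eq (aSeq d γ) n, ← ha]
    rw [Finset.sum_div, Finset.sum_mul, ← Finset.sum_neg_distrib, ← Finset.sum_add_distrib,
      Finset.mul_sum]
    refine Finset.sum_congr rfl fun j _ => ?_
    have h1 := hane n
    field_simp
    ring
  -- per-direction identity
  have key : ∀ j : Fin d,
      (∑ᶠ n, ((a (n + Pi.single j 1) + a (n - Pi.single j 1)) * (ψ n ^ 2 / a n)
          - (ψ n * ψ (n + Pi.single j 1) + ψ n * ψ (n - Pi.single j 1))))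
        = ∑ᶠ n, a n * a (n - Pi.single j 1) *
            (ψ n / a n - ψ (n - Pi.single j 1) / a (n - Pi.single j 1)) ^ 2 := by
    intro j
    have hA : (Function.support fun n => a (n + Pi.single j 1) * (ψ n ^ 2 / a n)).Finite :=
      hsupp _ fun n h0 => by simp [h0]
    have hB : (Function.support fun n => a (n - Pi.single j 1) * (ψ n ^ 2 / a n)).Finite :=
      hsupp _ fun n h0 => by simp [h0]
    have hC : (Function.support fun n => ψ n * ψ (n + Pi.single j 1)).Finite :=
      hsupp _ fun n h0 => by simp [h0]
    have hD : (Function.support fun n => ψ n * ψ (n - Pi.single j 1)).Finite :=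
      hsupp _ fun n h0 => by simp [h0]
    have hA' : (Function.support fun n =>
        a n * (ψ (n - Pi.single j 1) ^ 2 / a (n - Pi.single j 1))).Finite :=
      hsupp' j _ fun n h0 => by simp [h0]
    calc (∑ᶠ n, ((a (n + Pi.single j 1) + a (n - Pi.single j 1)) * (ψ n ^ 2 / a n)
            - (ψ n * ψ (n + Pi.single j 1) + ψ n * ψ (n - Pi.single j 1))))
        = (∑ᶠ n, (a (n + Pi.single j 1) * (ψ n ^ 2 / a n)
              + a (n - Pi.single j 1) * (ψ n ^ 2 / a n)))
            - ∑ᶠ n, (ψ n * ψ (n + Pi.single j 1) + ψ n * ψ (n - Pi.single j 1)) := by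
          rw [← finsum_sub_distrib (haddsupp _ _ hA hB) (haddsupp _ _ hC hD)]
          exact finsum_congr fun n => by ring
      _ = ((∑ᶠ n, a (n + Pi.single j 1) * (ψ n ^ 2 / a n))
              + ∑ᶠ n, a (n - Pi.single j 1) * (ψ n ^ 2 / a n))
            - ((∑ᶠ n, ψ n * ψ (n + Pi.single j 1)) + ∑ᶠ n, ψ n * ψ (n - Pi.single j 1)) := by
          rw [finsum_add_distrib hA hB, finsum_add_distrib hC hD]
      _ = ((∑ᶠ n, a (n - Pi.single j 1) * (ψ n ^ 2 / a n))
              + ∑ᶠ n, a n * (ψ (n - Pi.single j 1) ^ 2 / a (n - Pi.single j 1)))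
            - ((∑ᶠ n, ψ n * ψ (n - Pi.single j 1)) + ∑ᶠ n, ψ n * ψ (n - Pi.single j 1)) := by
          rw [hAshift j, hCD j]; ring
      _ = (∑ᶠ n, (a (n - Pi.single j 1) * (ψ n ^ 2 / a n)
              + a n * (ψ (n - Pi.single j 1) ^ 2 / a (n - Pi.single j 1))))
            - ∑ᶠ n, (ψ n * ψ (n - Pi.single j 1) + ψ n * ψ (n - Pi.single j 1)) := by
          rw [finsum_add_distrib hB hA', finsum_add_distrib hD hD]
      _ = ∑ᶠ n, ((a (n - Pi.single j 1) * (ψ n ^ 2 / a n)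
              + a n * (ψ (n - Pi.single j 1) ^ 2 / a (n - Pi.single j 1)))
            - (ψ n * ψ (n - Pi.single j 1) + ψ n * ψ (n - Pi.single j 1))) :=
          (finsum_sub_distrib (haddsupp _ _ hB hA') (haddsupp _ _ hD hD)).symm
      _ = ∑ᶠ n, a n * a (n - Pi.single j 1) *
            (ψ n / a n - ψ (n - Pi.single j 1) / a (n - Pi.single j 1)) ^ 2 :=
          finsum_congr fun n => by
            have h1 := hane n
            have h2 := hane (n - Pi.single j 1)
            field_simp
            ring
  have hG : ∀ j : Fin d, (Function.support fun n =>
      (a (n + Pi.single j 1) + a (n - Pi.single j 1)) * (ψ n ^ 2 / a n)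
        - (ψ n * ψ (n + Pi.single j 1) + ψ n * ψ (n - Pi.single j 1))).Finite :=
    fun j => hsupp _ fun n h0 => by simp [h0]
  have main : (∑ᶠ n : Fin d → ℤ, ψ n * (-lap ψ n + Vpot d γ n * ψ n))
      = ∑ j : Fin d, ∑ᶠ n : Fin d → ℤ, a n * a (n - Pi.single j 1) *
          (ψ n / a n - ψ (n - Pi.single j 1) / a (n - Pi.single j 1)) ^ 2 := by
    calc (∑ᶠ n : Fin d → ℤ, ψ n * (-lap ψ n + Vpot d γ n * ψ n))
        = ∑ᶠ n : Fin d → ℤ, ∑ j : Fin d,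
            ((a (n + Pi.single j 1) + a (n - Pi.single j 1)) * (ψ n ^ 2 / a n)
              - (ψ n * ψ (n + Pi.single j 1) + ψ n * ψ (n - Pi.single j 1))) :=
          finsum_congr hexpand
      _ = ∑ j : Fin d, ∑ᶠ n : Fin d → ℤ,
            ((a (n + Pi.single j 1) + a (n - Pi.single j 1)) * (ψ n ^ 2 / a n)
              - (ψ n * ψ (n + Pi.single j 1) + ψ n * ψ (n - Pi.single j 1))) :=
          finsum_sum_comm Finset.univ _ (fun j _ => hG j)
      _ = _ := Finset.sum_congr rfl fun j _ => key j
  refine ⟨main, ?_⟩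
  rw [main]
  refine Finset.sum_nonneg fun j _ => finsum_nonneg fun n => ?_
  exact mul_nonneg (mul_nonneg (hapos _).le (hapos _).le) (sq_nonneg _)
end
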